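/- In the tanh-network setting, the expected loss θ ↦ E_z[f(θ, z)] is Lipschitz continuous on Θ. -/

import Mathlib

open MeasureTheory
open scoped BigOperators

noncomputable section

/-- Parameter space of an `n`-layer fully connected network with layer widths `κ`:
for each layer `i` a weight matrix `W_i ∈ ℝ^{κ(i+1) × κ i}` and a bias `b_i ∈ ℝ^{κ(i+1)}`. -/
abbrev NNParams (κ : ℕ → ℕ) (n : ℕ) :=
  (i : Fin n) → ((Fin (κ (i.1 + 1)) → Fin (κ i.1) → ℝ) × (Fin (κ (i.1 + 1)) → ℝ))

/-- The layers of the tanh network: `x₀ = z`, `x_{i+1} = tanh(W_{i+1} x_i + b_{i+1})`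
entrywise for the hidden layers `i + 1 ≤ n - 1`, and the affine output layer
`x_n = W_n x_{n-1} + b_n` (junk value `0` beyond layer `n`). -/
def tanhNet (κ : ℕ → ℕ) (n : ℕ) (θ : NNParams κ n) (z : Fin (κ 0) → ℝ) :
    (i : ℕ) → Fin (κ i) → ℝ
  | 0 => z
  | (i + 1) =>
    if h : i < n then
      fun j =>
        let pre := (∑ l, (θ ⟨i, h⟩).1 j l * tanhNet κ n θ z i l) + (θ ⟨i, h⟩).2 j
        if i + 2 ≤ n then Real.tanh pre else pre
    else 0

/-- Squared-error loss `f(θ,z) = ‖x_n(θ,z) − f̂(z)‖²` of the tanh network. -/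
def tanhLoss (κ : ℕ → ℕ) (n : ℕ) (fhat : (Fin (κ 0) → ℝ) → (Fin (κ n) → ℝ))
    (θ : NNParams κ n) (z : Fin (κ 0) → ℝ) : ℝ :=
  ∑ j, (tanhNet κ n θ z n j - fhat z j) ^ 2

/-- The standard Gaussian measure on `ℝ^d` (i.i.d. `N(0,1)` coordinates). -/
def stdGaussian (d : ℕ) : Measure (Fin d → ℝ) :=
  Measure.pi fun _ => ProbabilityTheory.gaussianReal 0 1

/-!
On a ball `‖θ‖ ≤ R` (sup norms throughout), induction over the layers — every activation is
1-Lipschitz and fixes `0` — gives `‖x_i(θ,z)‖ ≤ B (1 + ‖z‖)` and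
`‖x_i(θ,z) - x_i(θ',z)‖ ≤ L (1 + ‖z‖) ‖θ - θ'‖`. Writing the difference of squared errors as
`(a - b)(a + b - 2c)` then yields `|f(θ,z) - f(θ',z)| ≤ C ((1 + ‖z‖)² + ∑ⱼ f̂(z)ⱼ²) ‖θ - θ'‖`, and
the right side is integrable for the standard Gaussian because it has second moments.
-/

namespace Real

theorem hasDerivAt_tanh (x : ℝ) : HasDerivAt tanh (1 / cosh x ^ 2) x := by
  have h := (hasDerivAt_sinh x).div (hasDerivAt_cosh x) (cosh_pos x).ne'
  rw [show cosh x * cosh x - sinh x * sinh x = 1 by nlinarith [cosh_sq_sub_sinh_sq x]] at h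
  exact h.congr_of_eventuallyEq (.of_forall tanh_eq_sinh_div_cosh)

theorem lipschitzWith_tanh : LipschitzWith 1 tanh := by
  refine lipschitzWith_of_nnnorm_deriv_le (fun x => (hasDerivAt_tanh x).differentiableAt)
    fun x => ?_
  rw [(hasDerivAt_tanh x).deriv, ← NNReal.coe_le_coe, coe_nnnorm, norm_of_nonneg (by positivity),
    NNReal.coe_one, div_le_one (by positivity)]
  nlinarith [one_le_cosh x]

end Real

section Layer

variable {m k : ℕ}

def layer (φ : ℝ → ℝ) (W : Fin m → Fin k → ℝ) (b : Fin m → ℝ) (x : Fin k → ℝ) : Fin m → ℝ :=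
  fun j => φ (∑ l, W j l * x l + b j)

theorem abs_sum_mul_le (W : Fin m → Fin k → ℝ) (x : Fin k → ℝ) (j : Fin m) :
    |∑ l, W j l * x l| ≤ k * ‖W‖ * ‖x‖ := by
  calc |∑ l, W j l * x l| ≤ ∑ l, |W j l| * |x l| := by
        simpa only [abs_mul] using Finset.abs_sum_le_sum_abs (fun l => W j l * x l) Finset.univ
    _ ≤ ∑ _l : Fin k, (‖W‖ * ‖x‖ : ℝ) := by
        gcongr with l
        · exact (norm_le_pi_norm (W j) l).trans (norm_le_pi_norm W j)
        · exact norm_le_pi_norm x l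
    _ = k * ‖W‖ * ‖x‖ := by simp [mul_assoc]

variable {φ : ℝ → ℝ}

theorem continuous_layer (hφ : Continuous φ) (W : Fin m → Fin k → ℝ) (b : Fin m → ℝ) :
    Continuous (layer φ W b) := by
  unfold layer
  fun_prop

theorem norm_layer_le (hφ : LipschitzWith 1 φ) (hφ0 : φ 0 = 0) (W : Fin m → Fin k → ℝ)
    (b : Fin m → ℝ) (x : Fin k → ℝ) : ‖layer φ W b x‖ ≤ k * ‖W‖ * ‖x‖ + ‖b‖ := by
  refine pi_norm_le_iff_of_nonneg (by positivity) |>.mpr fun j => ?_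
  calc ‖φ (∑ l, W j l * x l + b j)‖ ≤ |∑ l, W j l * x l + b j| := by
        simpa [hφ0, Real.dist_eq] using hφ.dist_le_mul (∑ l, W j l * x l + b j) 0
    _ ≤ |∑ l, W j l * x l| + |b j| := abs_add_le _ _
    _ ≤ k * ‖W‖ * ‖x‖ + ‖b‖ := add_le_add (abs_sum_mul_le W x j) (norm_le_pi_norm b j)

theorem norm_layer_sub_layer_le (hφ : LipschitzWith 1 φ) (W W' : Fin m → Fin k → ℝ)
    (b b' : Fin m → ℝ) (x x' : Fin k → ℝ) :
    ‖layer φ W b x - layer φ W' b' x'‖ ≤ k * (‖W - W'‖ * ‖x‖ + ‖W'‖ * ‖x - x'‖) + ‖b - b'‖ := by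
  refine pi_norm_le_iff_of_nonneg (by positivity) |>.mpr fun j => ?_
  have hsplit : (∑ l, W j l * x l + b j) - (∑ l, W' j l * x' l + b' j) =
      ∑ l, (W - W') j l * x l + ∑ l, W' j l * (x - x') l + (b - b') j := by
    simp only [Pi.sub_apply, sub_mul, mul_sub, Finset.sum_sub_distrib]
    ring
  calc ‖layer φ W b x j - layer φ W' b' x' j‖
      ≤ |(∑ l, W j l * x l + b j) - (∑ l, W' j l * x' l + b' j)| := by
        simpa [layer, Real.dist_eq] using hφ.dist_le_mul _ _
    _ ≤ |∑ l, (W - W') j l * x l| + |∑ l, W' j l * (x - x') l| + |(b - b') j| := by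
        rw [hsplit]
        exact (abs_add_le _ _).trans (add_le_add_left (abs_add_le _ _) _)
    _ ≤ k * ‖W - W'‖ * ‖x‖ + k * ‖W'‖ * ‖x - x'‖ + ‖b - b'‖ := by
        gcongr
        exacts [abs_sum_mul_le _ _ j, abs_sum_mul_le _ _ j, norm_le_pi_norm (b - b') j]
    _ = k * (‖W - W'‖ * ‖x‖ + ‖W'‖ * ‖x - x'‖) + ‖b - b'‖ := by ring

end Layer

section TanhNet

variable {κ : ℕ → ℕ} {n : ℕ}

/-- The activation producing layer `i + 1` from layer `i`. -/
def tanhActivation (n i : ℕ) : ℝ → ℝ := if i + 2 ≤ n then Real.tanh else id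

theorem lipschitzWith_tanhActivation (n i : ℕ) : LipschitzWith 1 (tanhActivation n i) := by
  unfold tanhActivation
  split_ifs
  exacts [Real.lipschitzWith_tanh, LipschitzWith.id]

theorem tanhActivation_zero (n i : ℕ) : tanhActivation n i 0 = 0 := by
  unfold tanhActivation
  split_ifs <;> simp

theorem tanhNet_succ_of_lt (θ : NNParams κ n) (z : Fin (κ 0) → ℝ) {i : ℕ} (h : i < n) :
    tanhNet κ n θ z (i + 1) =
      layer (tanhActivation n i) (θ ⟨i, h⟩).1 (θ ⟨i, h⟩).2 (tanhNet κ n θ z i) := by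
  funext j
  simp only [tanhNet, h, dite_true, layer, tanhActivation]
  split_ifs <;> rfl

theorem tanhNet_succ_of_le (θ : NNParams κ n) (z : Fin (κ 0) → ℝ) {i : ℕ} (h : n ≤ i) :
    tanhNet κ n θ z (i + 1) = 0 := by
  simp [tanhNet, h.not_gt]

theorem continuous_tanhNet (θ : NNParams κ n) (i : ℕ) :
    Continuous fun z => tanhNet κ n θ z i := by
  induction i with
  | zero => exact continuous_id
  | succ i ih =>
    rcases lt_or_ge i n with h | h
    · simp only [tanhNet_succ_of_lt _ _ h]
      exact (continuous_layer (lipschitzWith_tanhActivation n i).continuous _ _).comp ih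
    · simp only [tanhNet_succ_of_le _ _ h]
      exact continuous_const

theorem norm_weight_le (θ : NNParams κ n) (i : Fin n) : ‖(θ i).1‖ ≤ ‖θ‖ :=
  (norm_fst_le _).trans (norm_le_pi_norm θ i)

theorem norm_bias_le (θ : NNParams κ n) (i : Fin n) : ‖(θ i).2‖ ≤ ‖θ‖ :=
  (norm_snd_le _).trans (norm_le_pi_norm θ i)

theorem exists_norm_tanhNet_le (κ : ℕ → ℕ) (n : ℕ) (R : ℝ) (i : ℕ) :
    ∃ B, 0 ≤ B ∧ ∀ θ : NNParams κ n, ‖θ‖ ≤ R → ∀ z,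
      ‖tanhNet κ n θ z i‖ ≤ B * (1 + ‖z‖) := by
  induction i with
  | zero => exact ⟨1, zero_le_one, fun θ _ z => by simp [tanhNet]⟩
  | succ i ih =>
    obtain ⟨B, hB, hx⟩ := ih
    rcases lt_or_ge i n with h | h
    · refine ⟨κ i * max R 0 * B + max R 0, by positivity, fun θ hθ z => ?_⟩
      have hW := (norm_weight_le θ ⟨i, h⟩).trans (hθ.trans (le_max_left R 0))
      have hb := (norm_bias_le θ ⟨i, h⟩).trans (hθ.trans (le_max_left R 0))
      have hM : (1 : ℝ) ≤ 1 + ‖z‖ := le_add_of_nonneg_right (norm_nonneg z)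
      rw [tanhNet_succ_of_lt _ _ h]
      refine (norm_layer_le (lipschitzWith_tanhActivation n i) (tanhActivation_zero n i)
        _ _ _).trans ?_
      calc κ i * ‖(θ ⟨i, h⟩).1‖ * ‖tanhNet κ n θ z i‖ + ‖(θ ⟨i, h⟩).2‖
          ≤ κ i * max R 0 * (B * (1 + ‖z‖)) + max R 0 * (1 + ‖z‖) := by
            gcongr
            exacts [hx θ hθ z, hb.trans (le_mul_of_one_le_right (le_max_right R 0) hM)]
        _ = (κ i * max R 0 * B + max R 0) * (1 + ‖z‖) := by ring
    · exact ⟨0, le_rfl, fun θ _ z => by simp [tanhNet_succ_of_le _ _ h]⟩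

theorem exists_norm_tanhNet_sub_le (κ : ℕ → ℕ) (n : ℕ) (R : ℝ) (i : ℕ) :
    ∃ L, 0 ≤ L ∧ ∀ θ θ' : NNParams κ n, ‖θ‖ ≤ R → ‖θ'‖ ≤ R → ∀ z,
      ‖tanhNet κ n θ z i - tanhNet κ n θ' z i‖ ≤ L * (1 + ‖z‖) * dist θ θ' := by
  induction i with
  | zero => exact ⟨0, le_rfl, fun θ θ' _ _ z => by simp [tanhNet]⟩
  | succ i ih =>
    obtain ⟨L, hL, hdx⟩ := ih
    obtain ⟨B, hB, hx⟩ := exists_norm_tanhNet_le κ n R i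
    rcases lt_or_ge i n with h | h
    · refine ⟨κ i * (B + max R 0 * L) + 1, by positivity, fun θ θ' hθ hθ' z => ?_⟩
      have hW' := (norm_weight_le θ' ⟨i, h⟩).trans (hθ'.trans (le_max_left R 0))
      have hdW : ‖(θ ⟨i, h⟩).1 - (θ' ⟨i, h⟩).1‖ ≤ dist θ θ' :=
        (norm_weight_le (θ - θ') ⟨i, h⟩).trans_eq (dist_eq_norm θ θ').symm
      have hdb : ‖(θ ⟨i, h⟩).2 - (θ' ⟨i, h⟩).2‖ ≤ dist θ θ' :=
        (norm_bias_le (θ - θ') ⟨i, h⟩).trans_eq (dist_eq_norm θ θ').symm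
      have hM : (1 : ℝ) ≤ 1 + ‖z‖ := le_add_of_nonneg_right (norm_nonneg z)
      simp only [tanhNet_succ_of_lt _ _ h]
      refine (norm_layer_sub_layer_le (lipschitzWith_tanhActivation n i) _ _ _ _ _ _).trans ?_
      calc κ i * (‖(θ ⟨i, h⟩).1 - (θ' ⟨i, h⟩).1‖ * ‖tanhNet κ n θ z i‖
            + ‖(θ' ⟨i, h⟩).1‖ * ‖tanhNet κ n θ z i - tanhNet κ n θ' z i‖)
            + ‖(θ ⟨i, h⟩).2 - (θ' ⟨i, h⟩).2‖
          ≤ κ i * (dist θ θ' * (B * (1 + ‖z‖)) + max R 0 * (L * (1 + ‖z‖) * dist θ θ'))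
            + dist θ θ' * (1 + ‖z‖) := by
            gcongr
            exacts [hx θ hθ z, hdx θ θ' hθ hθ' z,
              hdb.trans (le_mul_of_one_le_right dist_nonneg hM)]
        _ = (κ i * (B + max R 0 * L) + 1) * (1 + ‖z‖) * dist θ θ' := by ring
    · exact ⟨0, le_rfl, fun θ θ' _ _ z => by simp [tanhNet_succ_of_le _ _ h]⟩

end TanhNet

section SquaredError

variable {m : ℕ}

theorem sum_sq_sub_le (a c : Fin m → ℝ) :
    ∑ j, (a j - c j) ^ 2 ≤ 2 * (m * ‖a‖ ^ 2 + ∑ j, c j ^ 2) := by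
  have hterm (j : Fin m) : (a j - c j) ^ 2 ≤ 2 * ‖a‖ ^ 2 + 2 * c j ^ 2 := by
    have ha : |a j| ≤ ‖a‖ := norm_le_pi_norm a j
    nlinarith [sq_nonneg (a j + c j), sq_abs (a j), pow_le_pow_left₀ (abs_nonneg _) ha 2]
  calc ∑ j, (a j - c j) ^ 2 ≤ ∑ j, (2 * ‖a‖ ^ 2 + 2 * c j ^ 2) :=
        Finset.sum_le_sum fun j _ => hterm j
    _ = 2 * (m * ‖a‖ ^ 2 + ∑ j, c j ^ 2) := by
      simp only [Finset.sum_add_distrib, ← Finset.mul_sum, Finset.sum_const, Finset.card_univ,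
        Fintype.card_fin, nsmul_eq_mul]
      ring

theorem abs_sum_sq_sub_sub_sum_sq_sub_le (a b c : Fin m → ℝ) :
    |∑ j, (a j - c j) ^ 2 - ∑ j, (b j - c j) ^ 2|
      ≤ ‖a - b‖ * (m * (‖a‖ + ‖b‖) + 2 * ∑ j, |c j|) := by
  rw [← Finset.sum_sub_distrib]
  calc |∑ j, ((a j - c j) ^ 2 - (b j - c j) ^ 2)|
      ≤ ∑ j, |a j - b j| * |a j + b j - 2 * c j| := by
        simp only [← abs_mul]
        refine (Finset.abs_sum_le_sum_abs _ _).trans_eq (Finset.sum_congr rfl fun j _ => ?_)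
        ring_nf
    _ ≤ ∑ j, ‖a - b‖ * (‖a‖ + ‖b‖ + 2 * |c j|) := by
        gcongr with j
        · exact norm_le_pi_norm (a - b) j
        · calc |a j + b j - 2 * c j| ≤ |a j| + |b j| + 2 * |c j| := by
                have := abs_sub (a j + b j) (2 * c j)
                rw [abs_mul, abs_two] at this
                linarith [abs_add_le (a j) (b j)]
            _ ≤ ‖a‖ + ‖b‖ + 2 * |c j| := by
                gcongr
                exacts [norm_le_pi_norm a j, norm_le_pi_norm b j]
    _ = ‖a - b‖ * (m * (‖a‖ + ‖b‖) + 2 * ∑ j, |c j|) := by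
        rw [← Finset.mul_sum, Finset.sum_add_distrib, Finset.sum_add_distrib, ← Finset.mul_sum]
        simp only [Finset.sum_const, Finset.card_univ, Fintype.card_fin, nsmul_eq_mul]
        ring

end SquaredError

section TanhLoss

variable {κ : ℕ → ℕ} {n : ℕ}

theorem measurable_tanhLoss {fhat : (Fin (κ 0) → ℝ) → (Fin (κ n) → ℝ)} (hfhat : Measurable fhat)
    (θ : NNParams κ n) : Measurable (tanhLoss κ n fhat θ) := by
  have hnet := (continuous_tanhNet θ n).measurable
  unfold tanhLoss
  fun_prop

theorem exists_tanhLoss_le (κ : ℕ → ℕ) (n : ℕ) (R : ℝ)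
    (fhat : (Fin (κ 0) → ℝ) → (Fin (κ n) → ℝ)) :
    ∃ C, ∀ θ : NNParams κ n, ‖θ‖ ≤ R → ∀ z,
      tanhLoss κ n fhat θ z ≤ C * ((1 + ‖z‖) ^ 2 + ∑ j, fhat z j ^ 2) := by
  obtain ⟨B, hB, hx⟩ := exists_norm_tanhNet_le κ n R n
  refine ⟨2 * (κ n * B ^ 2 + 1), fun θ hθ z => (sum_sq_sub_le _ _).trans ?_⟩
  have hxz : ‖tanhNet κ n θ z n‖ ^ 2 ≤ B ^ 2 * (1 + ‖z‖) ^ 2 := by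
    rw [← mul_pow]; exact pow_le_pow_left₀ (norm_nonneg _) (hx θ hθ z) 2
  have hS : 0 ≤ ∑ j, fhat z j ^ 2 := by positivity
  calc 2 * (κ n * ‖tanhNet κ n θ z n‖ ^ 2 + ∑ j, fhat z j ^ 2)
      ≤ 2 * (κ n * (B ^ 2 * (1 + ‖z‖) ^ 2) + ∑ j, fhat z j ^ 2) := by gcongr
    _ ≤ 2 * (κ n * B ^ 2 + 1) * ((1 + ‖z‖) ^ 2 + ∑ j, fhat z j ^ 2) := by
      nlinarith [mul_nonneg (by positivity : (0 : ℝ) ≤ κ n * B ^ 2) hS, sq_nonneg (1 + ‖z‖)]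

theorem exists_abs_tanhLoss_sub_le (κ : ℕ → ℕ) (n : ℕ) (R : ℝ)
    (fhat : (Fin (κ 0) → ℝ) → (Fin (κ n) → ℝ)) :
    ∃ C, ∀ θ θ' : NNParams κ n, ‖θ‖ ≤ R → ‖θ'‖ ≤ R → ∀ z,
      |tanhLoss κ n fhat θ z - tanhLoss κ n fhat θ' z|
        ≤ C * ((1 + ‖z‖) ^ 2 + ∑ j, fhat z j ^ 2) * dist θ θ' := by
  obtain ⟨B, hB, hx⟩ := exists_norm_tanhNet_le κ n R n
  obtain ⟨L, hL, hdx⟩ := exists_norm_tanhNet_sub_le κ n R n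
  refine ⟨L * ((2 * B + 1) * κ n + 1), fun θ θ' hθ hθ' z => ?_⟩
  set M := 1 + ‖z‖
  -- AM-GM on each `M * |f̂ z j|` keeps the bound integrable without moments of `‖z‖ ‖f̂ z‖`.
  have hcross : 2 * M * ∑ j, |fhat z j| ≤ κ n * M ^ 2 + ∑ j, fhat z j ^ 2 := by
    rw [Finset.mul_sum]
    calc ∑ j, 2 * M * |fhat z j| ≤ ∑ j, (M ^ 2 + fhat z j ^ 2) :=
          Finset.sum_le_sum fun j _ => by nlinarith [sq_nonneg (M - |fhat z j|), sq_abs (fhat z j)]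
      _ = κ n * M ^ 2 + ∑ j, fhat z j ^ 2 := by
          simp only [Finset.sum_add_distrib, Finset.sum_const, Finset.card_univ, Fintype.card_fin,
            nsmul_eq_mul]
  calc |tanhLoss κ n fhat θ z - tanhLoss κ n fhat θ' z|
      ≤ ‖tanhNet κ n θ z n - tanhNet κ n θ' z n‖
          * (κ n * (‖tanhNet κ n θ z n‖ + ‖tanhNet κ n θ' z n‖) + 2 * ∑ j, |fhat z j|) :=
        abs_sum_sq_sub_sub_sum_sq_sub_le _ _ _
    _ ≤ L * M * dist θ θ' * (κ n * (B * M + B * M) + 2 * ∑ j, |fhat z j|) := by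
        gcongr
        exacts [hdx θ θ' hθ hθ' z, hx θ hθ z, hx θ' hθ' z]
    _ = L * dist θ θ' * (2 * B * κ n * M ^ 2 + 2 * M * ∑ j, |fhat z j|) := by ring
    _ ≤ L * dist θ θ' * (2 * B * κ n * M ^ 2 + (κ n * M ^ 2 + ∑ j, fhat z j ^ 2)) := by gcongr
    _ ≤ L * ((2 * B + 1) * κ n + 1) * (M ^ 2 + ∑ j, fhat z j ^ 2) * dist θ θ' := by
        have hS : 0 ≤ ∑ j, fhat z j ^ 2 := by positivity
        have hc : 0 ≤ (2 * B + 1) * (κ n : ℝ) := by positivity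
        have hLd : 0 ≤ L * dist θ θ' := by positivity
        nlinarith [mul_nonneg hLd (mul_nonneg hc hS), mul_nonneg hLd (sq_nonneg M)]

end TanhLoss

instance (d : ℕ) : IsProbabilityMeasure (stdGaussian d) := by
  unfold stdGaussian; infer_instance

theorem memLp_id_stdGaussian (d : ℕ) (p : NNReal) : MemLp id p (stdGaussian d) :=
  memLp_pi_iff.2 fun k =>
    (ProbabilityTheory.memLp_id_gaussianReal p).comp_measurePreserving (measurePreserving_eval _ k)

theorem integrable_one_add_norm_sq {E : Type*} [NormedAddCommGroup E] [MeasurableSpace E]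
    {μ : Measure E} [IsFiniteMeasure μ] (h : MemLp id 2 μ) :
    Integrable (fun z => (1 + ‖z‖) ^ 2) μ :=
  ((memLp_const (1 : ℝ)).add h.norm).integrable_sq

theorem integrable_stdGaussian_one_add_norm_sq_add {d m : ℕ} {fhat : (Fin d → ℝ) → (Fin m → ℝ)}
    (hmom : Integrable (fun z => ∑ j, fhat z j ^ 2) (stdGaussian d)) :
    Integrable (fun z => (1 + ‖z‖) ^ 2 + ∑ j, fhat z j ^ 2) (stdGaussian d) :=
  (integrable_one_add_norm_sq (memLp_id_stdGaussian d 2)).add hmom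

theorem integrable_tanhLoss {κ : ℕ → ℕ} {n : ℕ} {fhat : (Fin (κ 0) → ℝ) → (Fin (κ n) → ℝ)}
    (hfhat : Measurable fhat) (hmom : Integrable (fun z => ∑ j, fhat z j ^ 2) (stdGaussian (κ 0)))
    (θ : NNParams κ n) : Integrable (tanhLoss κ n fhat θ) (stdGaussian (κ 0)) := by
  obtain ⟨C, hC⟩ := exists_tanhLoss_le κ n ‖θ‖ fhat
  refine ((integrable_stdGaussian_one_add_norm_sq_add hmom).const_mul C).mono'
    (measurable_tanhLoss hfhat θ).aestronglyMeasurable (.of_forall fun z => ?_)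
  rw [Real.norm_of_nonneg (by unfold tanhLoss; positivity)]
  exact hC θ le_rfl z

theorem lipschitzOnWith_integral_of_dominated {α Ω E : Type*} [PseudoMetricSpace α]
    [MeasurableSpace Ω] [NormedAddCommGroup E] [NormedSpace ℝ E] {μ : Measure Ω}
    {F : α → Ω → E} {g : Ω → ℝ} {s : Set α} (hF : ∀ θ ∈ s, Integrable (F θ) μ)
    (hg : Integrable g μ) (hdom : ∀ θ ∈ s, ∀ θ' ∈ s, ∀ᵐ z ∂μ, ‖F θ z - F θ' z‖ ≤ g z * dist θ θ') :
    LipschitzOnWith (∫ z, g z ∂μ).toNNReal (fun θ => ∫ z, F θ z ∂μ) s := by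
  refine LipschitzOnWith.of_dist_le_mul fun θ hθ θ' hθ' => ?_
  rw [dist_eq_norm, ← integral_sub (hF θ hθ) (hF θ' hθ')]
  calc ‖∫ z, (F θ z - F θ' z) ∂μ‖ ≤ ∫ z, g z * dist θ θ' ∂μ :=
        norm_integral_le_of_norm_le (hg.mul_const _) (hdom θ hθ θ' hθ')
    _ = (∫ z, g z ∂μ) * dist θ θ' := integral_mul_const _ _
    _ ≤ (∫ z, g z ∂μ).toNNReal * dist θ θ' := by gcongr; exact Real.le_coe_toNNReal _

theorem stmt_9_general (κ : ℕ → ℕ) (n : ℕ)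
    (fhat : (Fin (κ 0) → ℝ) → (Fin (κ n) → ℝ)) (hfhat : Measurable fhat)
    (hmom0 : Integrable (fun z => ∑ j, (fhat z j) ^ 2) (stdGaussian (κ 0)))
    (Θ : Set (NNParams κ n)) (hΘb : Bornology.IsBounded Θ) :
    ∃ C : NNReal, LipschitzOnWith C
      (fun θ => ∫ z, tanhLoss κ n fhat θ z ∂(stdGaussian (κ 0))) Θ := by
  obtain ⟨R, hR⟩ := hΘb.subset_closedBall 0
  have hnorm : ∀ θ ∈ Θ, ‖θ‖ ≤ R := fun θ hθ => mem_closedBall_zero_iff.1 (hR hθ)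
  obtain ⟨C, hC⟩ := exists_abs_tanhLoss_sub_le κ n R fhat
  exact ⟨_, lipschitzOnWith_integral_of_dominated
    (fun θ _ => integrable_tanhLoss hfhat hmom0 θ)
    ((integrable_stdGaussian_one_add_norm_sq_add hmom0).const_mul C)
    fun θ hθ θ' hθ' => .of_forall fun z => hC θ θ' (hnorm θ hθ) (hnorm θ' hθ') z⟩

/-- **Lipschitz continuity of the expected loss of the tanh network on a bounded set
(Theorem 2.4, item 3).**  The expected loss `θ ↦ E_z[f(θ,z)]` is Lipschitz continuous
on the bounded convex set `Θ`. -/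
theorem stmt_9 (κ : ℕ → ℕ) (n : ℕ) (hn : 1 ≤ n)
    (fhat : (Fin (κ 0) → ℝ) → (Fin (κ n) → ℝ)) (hfhat : Measurable fhat)
    (hmom0 : Integrable (fun z => ∑ j, (fhat z j) ^ 2) (stdGaussian (κ 0)))
    (hmom1 : ∀ k : Fin (κ 0),
      Integrable (fun z => (∑ j, (fhat z j) ^ 2) * |z k|) (stdGaussian (κ 0)))
    (hmom2 : ∀ k : Fin (κ 0),
      Integrable (fun z => (∑ j, (fhat z j) ^ 2) * |z k| ^ 2) (stdGaussian (κ 0)))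
    (Θ : Set (NNParams κ n)) (hΘb : Bornology.IsBounded Θ) (hΘc : Convex ℝ Θ) :
    ∃ C : NNReal, LipschitzOnWith C
      (fun θ => ∫ z, tanhLoss κ n fhat θ z ∂(stdGaussian (κ 0))) Θ :=
  stmt_9_general κ n fhat hfhat hmom0 Θ hΘb
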